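/- arXiv:2603.27293 — 2 statements merged into one kernel-verified Lean document; each statement's English description precedes it below -/
import Mathlib

section
/- Let B_{jk} | λ_k have density (λ_k²/4)exp(−λ_k|B_{jk}|^{1/2}) and λ_k ~ Gamma(a + k^{c₁}, rate k^{−c₂}) for j = 1,…,p and k ∈ ℕ⁺, all independent given the λ's. If a ≥ 4 and c₁ + c₂ > 1/4, then for every j, the sum ∑_{k=1}^∞ B_{jk}² converges almost surely; hence the random infinite loading matrix B lies in Θ_B = { B : max_{1≤j≤p} ∑_{k=1}^∞ B_{jk}² < ∞ } with probability one. -/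
open MeasureTheory Real ProbabilityTheory Set

/-! Given `λ`, the density `(λ²/4) exp(-λ √|y|)` has second moment `120 λ⁻⁴`, and for
`λ ~ Gamma(α, r)` one has `E[λ⁻⁴] = r⁴ Γ(α - 4) / Γ(α) ≤ r⁴ (α - 4)⁻⁴`. For column `k` this gives
`E[B_{jk}²] ≤ 120 (k + 1)^{-4(c₁ + c₂)}`, a summable sequence, so by monotone convergence
`∑_k B_{jk}²` has finite expectation and is therefore finite almost surely. -/

namespace Real

theorem pow_mul_Gamma_le_Gamma_add_nat {x : ℝ} (hx : 0 < x) (n : ℕ) :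
    x ^ n * Gamma x ≤ Gamma (x + n) := by
  induction n with
  | zero => simp
  | succ n ih =>
    have hxn : 0 < x + n := by positivity
    calc x ^ (n + 1) * Gamma x = x * (x ^ n * Gamma x) := by ring
      _ ≤ (x + n) * Gamma (x + n) :=
        mul_le_mul (by linarith) ih (by positivity) (by positivity)
      _ = Gamma (x + (n + 1 : ℕ)) := by
        rw [Nat.cast_succ, ← add_assoc, Gamma_add_one hxn.ne']

theorem integral_sq_mul_exp_neg_mul_sqrt_abs {b : ℝ} (hb : 0 < b) :
    ∫ x : ℝ, x ^ 2 * exp (-b * √|x|) = 480 * b ^ (-6 : ℝ) := by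
  have hIoi : ∫ x in Ioi (0 : ℝ), x ^ (2 : ℝ) * exp (-b * x ^ (1 / 2 : ℝ)) =
      240 * b ^ (-6 : ℝ) := by
    rw [integral_rpow_mul_exp_neg_mul_rpow (by norm_num) (by norm_num) hb,
      show ((2 : ℝ) + 1) / (1 / 2) = (5 : ℕ) + 1 by norm_num, Gamma_nat_eq_factorial]
    norm_num [Nat.factorial]
    ring
  have := integral_comp_abs (f := fun x : ℝ => x ^ (2 : ℝ) * exp (-b * x ^ (1 / 2 : ℝ)))
  simp only [rpow_two, sq_abs, ← sqrt_eq_rpow] at this hIoi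
  rw [this, hIoi]
  ring

end Real

theorem lintegral_exp_neg_mul_sqrt_abs_density_mul_sq {l : ℝ} (hl : 0 < l) :
    ∫⁻ y : ℝ, ENNReal.ofReal (l ^ 2 / 4 * exp (-l * √|y|)) * ENNReal.ofReal (y ^ 2) =
      ENNReal.ofReal (120 * l ^ (-4 : ℝ)) := by
  have hint := integral_sq_mul_exp_neg_mul_sqrt_abs hl
  -- integrable because its Bochner integral is nonzero
  have hf : Integrable fun y : ℝ => l ^ 2 / 4 * (y ^ 2 * exp (-l * √|y|)) :=
    (Integrable.of_integral_ne_zero (by rw [hint]; positivity)).const_mul _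
  simp_rw [← ENNReal.ofReal_mul (by positivity : (0 : ℝ) ≤ l ^ 2 / 4 * exp (-l * √|_|))]
  rw [← ofReal_integral_eq_lintegral_ofReal (hf.congr (.of_forall fun y => by ring))
    (.of_forall fun y => by positivity)]
  have hpow : l ^ 2 * l ^ (-6 : ℝ) = l ^ (-4 : ℝ) := by
    rw [← rpow_natCast, ← rpow_add hl]; norm_num
  calc _ = ENNReal.ofReal (∫ y, l ^ 2 / 4 * (y ^ 2 * exp (-l * √|y|))) := by
        congr 1; exact integral_congr_ae (.of_forall fun y => by ring)
    _ = _ := by rw [integral_const_mul, hint, ← hpow]; ring_nf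

theorem lintegral_gammaPDF_mul_rpow {a r t : ℝ} (ha : 0 < a) (hr : 0 < r) (hat : 0 < a + t) :
    ∫⁻ x, gammaPDF a r x * ENNReal.ofReal (x ^ t) =
      ENNReal.ofReal (Gamma (a + t) / (Gamma a * r ^ t)) := by
  have hpt : ∀ x : ℝ, x ≠ 0 → gammaPDF a r x * ENNReal.ofReal (x ^ t) =
      ENNReal.ofReal (Gamma (a + t) / (Gamma a * r ^ t)) * gammaPDF (a + t) r x := by
    intro x hx
    rcases hx.lt_or_gt with hneg | hpos
    · simp [gammaPDF_of_neg hneg]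
    have hΓa := Gamma_pos_of_pos ha
    have hΓat := Gamma_pos_of_pos hat
    rw [gammaPDF_of_nonneg hpos.le, gammaPDF_of_nonneg hpos.le,
      ← ENNReal.ofReal_mul (by positivity), ← ENNReal.ofReal_mul (by positivity)]
    congr 1
    rw [rpow_add hr, show a + t - 1 = a - 1 + t by ring, rpow_add hpos]
    field_simp
  rw [lintegral_congr_ae ((Measure.ae_ne volume 0).mono hpt), lintegral_const_mul' _ _
    ENNReal.ofReal_ne_top, lintegral_gammaPDF_eq_one hat hr, mul_one]

theorem lintegral_sq_eq_of_map_eq_withDensity {Ω : Type*} [MeasurableSpace Ω] {μ : Measure Ω}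
    {α r : ℝ} (hα : 4 < α) (hr : 0 < r) {Λ X : Ω → ℝ} (hΛ : Measurable Λ) (hX : Measurable X)
    (hmap : μ.map (fun ω => (Λ ω, X ω)) = (volume : Measure (ℝ × ℝ)).withDensity fun q =>
      ENNReal.ofReal (gammaPDFReal α r q.1 * (q.1 ^ 2 / 4) * exp (-q.1 * √|q.2|))) :
    ∫⁻ ω, ENNReal.ofReal (X ω ^ 2) ∂μ =
      ENNReal.ofReal (120 * (Gamma (α - 4) / (Gamma α * r ^ (-4 : ℝ)))) := by
  have hsq : Measurable fun q : ℝ × ℝ => ENNReal.ofReal (q.2 ^ 2) := by fun_prop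
  have hdens : Measurable fun q : ℝ × ℝ =>
      ENNReal.ofReal (gammaPDFReal α r q.1 * (q.1 ^ 2 / 4) * exp (-q.1 * √|q.2|)) := by
    have := measurable_gammaPDFReal α r
    fun_prop
  have hfactor : ∀ l y : ℝ,
      ENNReal.ofReal (gammaPDFReal α r l * (l ^ 2 / 4) * exp (-l * √|y|)) *
          ENNReal.ofReal (y ^ 2) =
        gammaPDF α r l *
          (ENNReal.ofReal (l ^ 2 / 4 * exp (-l * √|y|)) * ENNReal.ofReal (y ^ 2)) := by
    intro l y
    rw [mul_assoc _ (l ^ 2 / 4), ENNReal.ofReal_mul (gammaPDFReal_nonneg (by linarith) hr l),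
      gammaPDF, mul_assoc]
  have hinner : ∀ l : ℝ, l ≠ 0 →
      gammaPDF α r l *
          ∫⁻ y : ℝ, ENNReal.ofReal (l ^ 2 / 4 * exp (-l * √|y|)) * ENNReal.ofReal (y ^ 2) =
        ENNReal.ofReal 120 * (gammaPDF α r l * ENNReal.ofReal (l ^ (-4 : ℝ))) := by
    intro l hl
    rcases hl.lt_or_gt with hneg | hpos
    · simp [gammaPDF_of_neg hneg]
    rw [lintegral_exp_neg_mul_sqrt_abs_density_mul_sq hpos, ENNReal.ofReal_mul (by norm_num)]
    ring
  calc ∫⁻ ω, ENNReal.ofReal (X ω ^ 2) ∂μ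
      = ∫⁻ q, ENNReal.ofReal (q.2 ^ 2) ∂μ.map (fun ω => (Λ ω, X ω)) :=
        (lintegral_map hsq (hΛ.prodMk hX)).symm
    _ = ∫⁻ l, ∫⁻ y, gammaPDF α r l *
          (ENNReal.ofReal (l ^ 2 / 4 * exp (-l * √|y|)) * ENNReal.ofReal (y ^ 2)) := by
        rw [hmap, lintegral_withDensity_eq_lintegral_mul _ hdens hsq, Measure.volume_eq_prod,
          lintegral_prod _ (hdens.mul hsq).aemeasurable]
        simp only [Pi.mul_apply, hfactor]
    _ = ∫⁻ l, ENNReal.ofReal 120 * (gammaPDF α r l * ENNReal.ofReal (l ^ (-4 : ℝ))) := by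
        refine lintegral_congr_ae ((Measure.ae_ne volume 0).mono fun l hl => ?_)
        exact (lintegral_const_mul' _ _ (by simp [gammaPDF])).trans (hinner l hl)
    _ = _ := by
        rw [lintegral_const_mul' _ _ ENNReal.ofReal_ne_top,
          lintegral_gammaPDF_mul_rpow (by linarith) hr (by linarith),
          ← ENNReal.ofReal_mul (by norm_num), sub_eq_add_neg]

theorem Gamma_sub_four_div_mul_rpow_le {a c₁ c₂ u : ℝ} (ha : 4 ≤ a) (hu : 0 < u) :
    Gamma (a + u ^ c₁ - 4) / (Gamma (a + u ^ c₁) * (u ^ (-c₂)) ^ (-4 : ℝ)) ≤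
      u ^ (-(4 * (c₁ + c₂))) := by
  set x := a + u ^ c₁ - 4
  have ht : 0 < u ^ c₁ := rpow_pos_of_pos hu c₁
  have hx : u ^ c₁ ≤ x := by linarith
  have hx0 : 0 < x := ht.trans_le hx
  have hΓ := Gamma_pos_of_pos hx0
  have hr : (u ^ (-c₂)) ^ (-4 : ℝ) = u ^ (4 * c₂) := by
    rw [← rpow_mul hu.le]; ring_nf
  calc Gamma x / (Gamma (a + u ^ c₁) * (u ^ (-c₂)) ^ (-4 : ℝ))
      ≤ Gamma x / (x ^ 4 * Gamma x * u ^ (4 * c₂)) := by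
        rw [show a + u ^ c₁ = x + (4 : ℕ) by push_cast; ring, hr]
        have : 0 < x ^ 4 * Gamma x := by positivity
        gcongr
        exact pow_mul_Gamma_le_Gamma_add_nat hx0 4
    _ = (x ^ 4)⁻¹ * (u ^ (4 * c₂))⁻¹ := by field_simp
    _ ≤ ((u ^ c₁) ^ 4)⁻¹ * (u ^ (4 * c₂))⁻¹ := by gcongr
    _ = u ^ (-(4 * (c₁ + c₂))) := by
        rw [← rpow_natCast, ← rpow_mul hu.le, ← rpow_neg hu.le, ← rpow_neg hu.le,
          ← rpow_add hu]
        ring_nf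

theorem ae_summable_of_lintegral_le_of_summable {Ω : Type*} [MeasurableSpace Ω] {μ : Measure Ω}
    {f : ℕ → Ω → ℝ} {c : ℕ → ℝ} (hf_nonneg : ∀ k ω, 0 ≤ f k ω) (hf : ∀ k, AEMeasurable (f k) μ)
    (hle : ∀ k, ∫⁻ ω, ENNReal.ofReal (f k ω) ∂μ ≤ ENNReal.ofReal (c k)) (hc : Summable c) :
    ∀ᵐ ω ∂μ, Summable fun k => f k ω := by
  have htot : ∫⁻ ω, ∑' k, ENNReal.ofReal (f k ω) ∂μ ≠ ⊤ := by
    rw [lintegral_tsum fun k => (hf k).ennreal_ofReal]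
    exact ne_top_of_le_ne_top hc.tsum_ofReal_ne_top (ENNReal.tsum_le_tsum hle)
  filter_upwards [ae_lt_top' (AEMeasurable.tsum fun k => (hf k).ennreal_ofReal) htot]
    with ω hω
  exact (ENNReal.summable_toReal hω.ne).congr fun k => ENNReal.toReal_ofReal (hf_nonneg k ω)

theorem loading_matrix_in_theta_B_almost_surely_general
    {Ω : Type*} [MeasurableSpace Ω] (μ : Measure Ω)
    (p : ℕ) (a c₁ c₂ : ℝ) (ha : 4 ≤ a)
    (hc : 1 / 4 < c₁ + c₂)
    (L : ℕ → Ω → ℝ) (B : Fin p → ℕ → Ω → ℝ)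
    (hmeasL : ∀ k, Measurable (L k)) (hmeasB : ∀ j k, Measurable (B j k))
    (hjoint : ∀ (j : Fin p) (k : ℕ),
      Measure.map (fun ω => (L k ω, B j k ω)) μ =
        (volume : Measure (ℝ × ℝ)).withDensity fun q =>
          ENNReal.ofReal
            (gammaPDFReal (a + ((k : ℝ) + 1) ^ c₁) (((k : ℝ) + 1) ^ (-c₂)) q.1 *
              (q.1 ^ 2 / 4) * Real.exp (-q.1 * Real.sqrt |q.2|))) :
    ∀ᵐ ω ∂μ, ∀ j : Fin p, Summable fun k : ℕ => (B j k ω) ^ 2 := by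
  have hdecay : Summable fun k : ℕ => 120 * ((k : ℝ) + 1) ^ (-(4 * (c₁ + c₂))) := by
    refine .mul_left 120 ?_
    exact_mod_cast (summable_nat_add_iff 1).mpr (summable_nat_rpow.mpr (by linarith))
  refine ae_all_iff.mpr fun j => ?_
  refine ae_summable_of_lintegral_le_of_summable (fun k ω => sq_nonneg _)
    (fun k => ((hmeasB j k).pow_const 2).aemeasurable) (fun k => ?_) hdecay
  have hu : (0 : ℝ) < k + 1 := by positivity
  rw [lintegral_sq_eq_of_map_eq_withDensity (by linarith [rpow_pos_of_pos hu c₁])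
    (rpow_pos_of_pos hu _) (hmeasL k) (hmeasB j k) (hjoint j k)]
  exact ENNReal.ofReal_le_ofReal
    (mul_le_mul_of_nonneg_left (Gamma_sub_four_div_mul_rpow_le ha hu) (by norm_num))

/-- Under the L_{1/2} increasing shrinkage prior (column `k+1` has global parameter
`λ_k ~ Gamma(a + (k+1)^{c₁}, rate (k+1)^{−c₂})` and `B_{jk} | λ_k` has density
`(λ_k²/4)exp(−λ_k|B|^{1/2})`, independently across columns), if `a ≥ 4` and
`c₁ + c₂ > 1/4`, then almost surely `∑_k B_{jk}² < ∞` for every `j`; hence the random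
infinite loading matrix lies in `Θ_B` with probability one. -/
theorem loading_matrix_in_theta_B_almost_surely
    {Ω : Type*} [MeasurableSpace Ω] (μ : Measure Ω) [IsProbabilityMeasure μ]
    (p : ℕ) (a c₁ c₂ : ℝ) (ha : 4 ≤ a) (hc₁ : 0 < c₁) (hc₂ : 0 < c₂)
    (hc : 1 / 4 < c₁ + c₂)
    (L : ℕ → Ω → ℝ) (B : Fin p → ℕ → Ω → ℝ)
    (hmeasL : ∀ k, Measurable (L k)) (hmeasB : ∀ j k, Measurable (B j k))
    (hjoint : ∀ (j : Fin p) (k : ℕ),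
      Measure.map (fun ω => (L k ω, B j k ω)) μ =
        (volume : Measure (ℝ × ℝ)).withDensity fun q =>
          ENNReal.ofReal
            (gammaPDFReal (a + ((k : ℝ) + 1) ^ c₁) (((k : ℝ) + 1) ^ (-c₂)) q.1 *
              (q.1 ^ 2 / 4) * Real.exp (-q.1 * Real.sqrt |q.2|)))
    (hindep : iIndepFun
      (fun k ω => (L k ω, fun j : Fin p => B j k ω)) μ) :
    ∀ᵐ ω ∂μ, ∀ j : Fin p, Summable fun k : ℕ => (B j k ω) ^ 2 :=
  loading_matrix_in_theta_B_almost_surely_general μ p a c₁ c₂ ha hc L B hmeasL hmeasB hjoint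
end

section
/- If B | τ², λ ~ N(0, τ²/λ⁴), τ² | v ~ Exponential(rate 1/(2v²)), and v ~ Gamma(3/2, rate 1/4), then the marginal density of B given λ is (λ²/4)·exp(−λ|B|^{1/2}). -/
/-!
Both mixing steps reduce to the integral
`∫₀^∞ exp (-(a/t + b t)) / √t dt = √(π/b) exp (-2√(ab))`.
After `t = s²` and completing the square, `a/s² + b s² = 2√(ab) + (√b s - √a/s)²`, and the
Cauchy–Schlömilch substitution `u = √b s - √a/s` turns the remaining integral into half a
Gaussian integral. The inner integral over `τ²` is then a Laplace density in `B` with scale `v/λ²`,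
and the outer integral over `v` is the same identity once more.
-/

open MeasureTheory Real Set

section CauchySchlomilch

variable {c d : ℝ}

lemma strictMonoOn_mul_sub_div (hc : 0 < c) (hd : 0 ≤ d) :
    StrictMonoOn (fun s : ℝ => c * s - d / s) (Ioi 0) := by
  intro x hx y _ hxy
  have : d / y ≤ d / x := div_le_div_of_nonneg_left hd hx hxy.le
  have : c * x < c * y := mul_lt_mul_of_pos_left hxy hc
  dsimp only
  linarith

lemma hasDerivAt_mul_sub_div {x : ℝ} (hx : x ≠ 0) :
    HasDerivAt (fun s : ℝ => c * s - d / s) (c + d / x ^ 2) x := by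
  simpa only [div_eq_mul_inv, mul_one, mul_neg, sub_neg_eq_add] using
    ((hasDerivAt_id' x).const_mul c).fun_sub ((hasDerivAt_inv hx).const_mul d)

lemma image_mul_sub_div_Ioi (hc : 0 < c) (hd : 0 < d) :
    (fun s : ℝ => c * s - d / s) '' Ioi 0 = univ := by
  refine eq_univ_of_forall fun u => ?_
  set r := √(u ^ 2 + 4 * (c * d))
  have hr : r ^ 2 = u ^ 2 + 4 * (c * d) := sq_sqrt (by positivity)
  have hur : 0 < u + r := by nlinarith [sqrt_nonneg (u ^ 2 + 4 * (c * d)), mul_pos hc hd]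
  refine ⟨(u + r) / (2 * c), mem_Ioi.2 (by positivity), ?_⟩
  field_simp
  linear_combination hr

/-- The substitution `s ↦ d / (c s)` reverses the sign of `c s - d / s`. -/
lemma integral_Ioi_div_sq_mul_comp_mul_sub_div {f : ℝ → ℝ} (hf : Function.Even f)
    (hc : 0 < c) (hd : 0 < d) :
    ∫ s in Ioi 0, d / s ^ 2 * f (c * s - d / s) = c * ∫ s in Ioi 0, f (c * s - d / s) := by
  set ρ : ℝ → ℝ := fun s => d / (c * s)
  have hρ_inv : InvOn ρ ρ (Ioi 0) (Ioi 0) := by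
    constructor <;> intro s (hs : 0 < s) <;> simp only [ρ] <;> field_simp
  have hρ_maps : MapsTo ρ (Ioi 0) (Ioi 0) := fun s (hs : 0 < s) => by
    simp only [ρ, mem_Ioi]; positivity
  have hρ' : ∀ x ∈ Ioi (0 : ℝ), HasDerivWithinAt ρ (-(d / (c * x ^ 2))) (Ioi 0) x :=
    fun x (hx : 0 < x) => HasDerivAt.hasDerivWithinAt <| by
      simpa only [ρ, div_eq_mul_inv, mul_inv, ← mul_assoc, mul_neg] using
        (hasDerivAt_inv hx.ne').const_mul (d / c)
  have key := integral_image_eq_integral_abs_deriv_smul measurableSet_Ioi hρ'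
    hρ_inv.1.injOn (fun σ => f (c * σ - d / σ))
  rw [(hρ_inv.bijOn hρ_maps hρ_maps).image_eq] at key
  rw [key, ← integral_const_mul]
  refine setIntegral_congr_fun measurableSet_Ioi fun s (hs : 0 < s) => ?_
  have hflip : c * ρ s - d / ρ s = -(c * s - d / s) := by
    simp only [ρ]; field_simp; ring
  rw [smul_eq_mul, hflip, hf, abs_neg, abs_of_pos (by positivity)]
  field_simp

lemma integral_eq_integral_Ioi_mul_comp_mul_sub_div (f : ℝ → ℝ) (hc : 0 < c) (hd : 0 < d) :
    ∫ u, f u = ∫ s in Ioi 0, (c + d / s ^ 2) * f (c * s - d / s) := by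
  rw [← setIntegral_univ, ← image_mul_sub_div_Ioi hc hd,
    integral_image_eq_integral_abs_deriv_smul measurableSet_Ioi
      (fun x (hx : 0 < x) => (hasDerivAt_mul_sub_div hx.ne').hasDerivWithinAt)
      (strictMonoOn_mul_sub_div hc hd.le).injOn]
  refine setIntegral_congr_fun measurableSet_Ioi fun s (hs : 0 < s) => ?_
  rw [smul_eq_mul, abs_of_pos (by positivity)]

lemma integrable_iff_integrableOn_mul_comp_mul_sub_div (f : ℝ → ℝ) (hc : 0 < c) (hd : 0 < d) :
    Integrable f ↔ IntegrableOn (fun s => (c + d / s ^ 2) * f (c * s - d / s)) (Ioi 0) := by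
  rw [← integrableOn_univ, ← image_mul_sub_div_Ioi hc hd,
    integrableOn_image_iff_integrableOn_abs_deriv_smul measurableSet_Ioi
      (fun x (hx : 0 < x) => (hasDerivAt_mul_sub_div hx.ne').hasDerivWithinAt)
      (strictMonoOn_mul_sub_div hc hd.le).injOn]
  refine integrableOn_congr_fun (fun s (hs : 0 < s) => ?_) measurableSet_Ioi
  rw [smul_eq_mul, abs_of_pos (by positivity)]

/-- The Cauchy–Schlömilch transformation. -/
theorem integral_Ioi_comp_mul_sub_div {f : ℝ → ℝ} (hf : Integrable f) (heven : Function.Even f)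
    (hc : 0 < c) (hd : 0 ≤ d) :
    ∫ s in Ioi 0, f (c * s - d / s) = (∫ u, f u) / (2 * c) := by
  rcases hd.eq_or_lt with rfl | hd
  · have hhalf : ∫ u, f u = 2 * ∫ u in Ioi 0, f u := by
      rw [← integral_comp_abs]
      congr 1 with u
      rcases abs_choice u with h | h <;> rw [h]
      exact (heven u).symm
    simp only [zero_div, sub_zero]
    rw [integral_comp_mul_left_Ioi f 0 hc, mul_zero, smul_eq_mul, hhalf]
    field_simp
  have hfull := (integrable_iff_integrableOn_mul_comp_mul_sub_div f hc hd).1 hf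
  have hI : IntegrableOn (fun s => f (c * s - d / s)) (Ioi 0) := by
    refine IntegrableOn.congr_fun
      (Integrable.bdd_mul (f := fun s => (c + d / s ^ 2)⁻¹) (c := c⁻¹) hfull ?_ ?_)
      (fun s (hs : 0 < s) => ?_) measurableSet_Ioi
    · refine ContinuousOn.aestronglyMeasurable ?_ measurableSet_Ioi
      fun_prop (disch := intro s (hs : 0 < s); positivity)
    · filter_upwards [ae_restrict_mem measurableSet_Ioi] with s (hs : 0 < s)
      rw [norm_inv, norm_of_nonneg (by positivity)]
      exact inv_anti₀ hc (le_add_of_nonneg_right (by positivity))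
    · rw [← mul_assoc, inv_mul_cancel₀ (by positivity), one_mul]
  have hJ : IntegrableOn (fun s => d / s ^ 2 * f (c * s - d / s)) (Ioi 0) :=
    (hfull.sub (hI.const_mul c)).congr_fun (fun s _ => by simp only [Pi.sub_apply]; ring)
      measurableSet_Ioi
  have hsplit : ∫ u, f u = c * (∫ s in Ioi 0, f (c * s - d / s))
      + ∫ s in Ioi 0, d / s ^ 2 * f (c * s - d / s) := by
    rw [integral_eq_integral_Ioi_mul_comp_mul_sub_div f hc hd, ← integral_const_mul,
      ← integral_add (hI.const_mul c) hJ]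
    simp only [add_mul]
  rw [hsplit, integral_Ioi_div_sq_mul_comp_mul_sub_div heven hc hd, eq_div_iff (by positivity)]
  ring

end CauchySchlomilch

lemma integral_Ioi_exp_neg_sq_mul_sub_div {c d : ℝ} (hc : 0 < c) (hd : 0 ≤ d) :
    ∫ s in Ioi 0, exp (-(c * s - d / s) ^ 2) = √π / (2 * c) := by
  have hgauss := integral_gaussian 1
  simp only [neg_mul, one_mul, div_one] at hgauss
  rw [integral_Ioi_comp_mul_sub_div (f := fun u => exp (-u ^ 2))
    (by simpa using integrable_exp_neg_mul_sq one_pos) (fun u => by simp) hc hd, hgauss]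

theorem integral_Ioi_exp_neg_div_add_mul_div_sqrt {a b : ℝ} (ha : 0 ≤ a) (hb : 0 < b) :
    ∫ t in Ioi 0, exp (-(a / t + b * t)) / √t = √(π / b) * exp (-2 * √(a * b)) := by
  rw [← integral_comp_rpow_Ioi_of_pos two_pos]
  have hsq : ∀ s > 0, -(a / s ^ 2 + b * s ^ 2) = -2 * √(a * b) + -(√b * s - √a / s) ^ 2 := by
    intro s hs
    rw [sqrt_mul ha]
    field_simp
    linear_combination (s ^ 4) * sq_sqrt hb.le + sq_sqrt ha
  calc _ = ∫ s in Ioi 0, 2 * exp (-2 * √(a * b)) * exp (-(√b * s - √a / s) ^ 2) := by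
        refine setIntegral_congr_fun measurableSet_Ioi fun s (hs : 0 < s) => ?_
        rw [show (2 : ℝ) - 1 = 1 by norm_num, rpow_one, rpow_two, sqrt_sq hs.le, hsq s hs,
          exp_add, smul_eq_mul]
        field_simp
    _ = √(π / b) * exp (-2 * √(a * b)) := by
        rw [integral_const_mul,
          integral_Ioi_exp_neg_sq_mul_sub_div (sqrt_pos.2 hb) (sqrt_nonneg a), sqrt_div' _ hb.le]
        field_simp

theorem integral_gaussian_div_mul_exponential {κ σ : ℝ} (hκ : 0 < κ) (hσ : 0 < σ) (x : ℝ) :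
    ∫ t in Ioi 0, (√(2 * π * (t / κ)))⁻¹ * exp (-x ^ 2 / (2 * (t / κ)))
        * (1 / (2 * σ ^ 2) * exp (-(1 / (2 * σ ^ 2)) * t))
      = √κ / (2 * σ) * exp (-(√κ * |x|) / σ) := by
  calc _ = ∫ t in Ioi 0, √κ / (2 * σ ^ 2 * √(2 * π))
        * (exp (-(κ * x ^ 2 / 2 / t + 1 / (2 * σ ^ 2) * t)) / √t) := by
        refine setIntegral_congr_fun measurableSet_Ioi fun t (ht : 0 < t) => ?_
        rw [sqrt_mul (by positivity), sqrt_div' _ hκ.le, neg_add, exp_add]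
        field_simp
    _ = √κ / (2 * σ) * exp (-(√κ * |x|) / σ) := by
        have h1 : √(π / (1 / (2 * σ ^ 2))) = σ * √(2 * π) := by
          rw [show π / (1 / (2 * σ ^ 2)) = (σ * √(2 * π)) ^ 2 by
            rw [mul_pow, sq_sqrt (by positivity)]; field_simp]
          exact sqrt_sq (by positivity)
        have h2 : √(κ * x ^ 2 / 2 * (1 / (2 * σ ^ 2))) = √κ * |x| / (2 * σ) := by
          rw [show κ * x ^ 2 / 2 * (1 / (2 * σ ^ 2)) = (√κ * |x| / (2 * σ)) ^ 2 by
            rw [div_pow, mul_pow, sq_abs, sq_sqrt hκ.le]; field_simp]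
          exact sqrt_sq (by positivity)
        rw [integral_const_mul, integral_Ioi_exp_neg_div_add_mul_div_sqrt (by positivity)
          (by positivity), h1, h2]
        field_simp

lemma one_div_four_rpow_three_div_two_div_Gamma :
    (1 / 4 : ℝ) ^ ((3 : ℝ) / 2) / Gamma (3 / 2) = 1 / (4 * √π) := by
  have hpow : (1 / 4 : ℝ) ^ ((3 : ℝ) / 2) = 1 / 8 := by
    rw [show (1 / 4 : ℝ) = (1 / 2) ^ (2 : ℝ) by norm_num, ← rpow_mul (by norm_num)]
    norm_num
  rw [hpow, show (3 / 2 : ℝ) = 1 / 2 + 1 by norm_num, Gamma_add_one (by norm_num),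
    Gamma_one_half_eq]
  field_simp
  norm_num

/-- Gaussian scale-mixture representation of the L_{1/2} prior:
if `B | τ², λ ~ N(0, τ²/λ⁴)`, `τ² | v ~ Exp(rate 1/(2v²))` and `v ~ Gamma(3/2, rate 1/4)`,
then the marginal density of `B` given `λ` is `(λ²/4)·exp(−λ|B|^{1/2})`. -/
theorem l_half_scale_mixture (l : ℝ) (hl : 0 < l) (B : ℝ) :
    ∫ v in Set.Ioi (0 : ℝ), ∫ t in Set.Ioi (0 : ℝ),
        (Real.sqrt (2 * Real.pi * (t / l ^ 4)))⁻¹ * Real.exp (-B ^ 2 / (2 * (t / l ^ 4)))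
          * ((1 / (2 * v ^ 2)) * Real.exp (-(1 / (2 * v ^ 2)) * t))
          * ((1 / 4 : ℝ) ^ ((3 : ℝ) / 2) / Real.Gamma (3 / 2)
              * Real.sqrt v * Real.exp (-(v / 4)))
      = (l ^ 2 / 4) * Real.exp (-l * Real.sqrt |B|) := by
  have hl4 : √(l ^ 4) = l ^ 2 := by
    rw [show l ^ 4 = (l ^ 2) ^ 2 by ring, sqrt_sq (by positivity)]
  rw [one_div_four_rpow_three_div_two_div_Gamma]
  calc _ = ∫ v in Ioi 0, l ^ 2 / (8 * √π) * (exp (-(l ^ 2 * |B| / v + 1 / 4 * v)) / √v) := by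
        refine setIntegral_congr_fun measurableSet_Ioi fun v (hv : 0 < v) => ?_
        rw [integral_mul_const, integral_gaussian_div_mul_exponential (by positivity) hv, hl4,
          neg_add, exp_add]
        field_simp
        rw [sq_sqrt hv.le]
        ring
    _ = l ^ 2 / 4 * exp (-l * √|B|) := by
        have h1 : √(π / (1 / 4)) = 2 * √π := by
          rw [show π / (1 / 4) = 2 ^ 2 * π by ring, sqrt_mul' _ pi_pos.le, sqrt_sq two_pos.le]
        have h2 : √(l ^ 2 * |B| * (1 / 4)) = l * √|B| / 2 := by
          rw [show l ^ 2 * |B| * (1 / 4) = (l / 2) ^ 2 * |B| by ring, sqrt_mul' _ (abs_nonneg B),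
            sqrt_sq (by positivity)]
          ring
        rw [integral_const_mul, integral_Ioi_exp_neg_div_add_mul_div_sqrt (by positivity)
          (by norm_num), h1, h2]
        field_simp
        norm_num
end
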